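/- arXiv:1504.02410 — 3 statements merged into one kernel-verified Lean document; each statement's English description precedes it below -/
import Mathlib

section
/- Let α be a real number and let ε : ℕ → ℝ satisfy ε(n) → 0 as n → ∞. Let (N_i) be a strictly increasing sequence of odd positive integers, let k be an even positive integer, and let (m_i) be odd integers and (γ_i) real numbers such that N_i·α = m_i/k + γ_i/(k·N_i) for every i. Suppose γ ∈ ℝ with |γ| < 1 is an accumulation point of the sequence (γ_i) (i.e. some subsequence of (γ_i) converges to γ), and suppose that there is no n ∈ ℕ with γ + k·n²·α ∈ ℤ. Then there are infinitely many indices i for which N_i is not a sum of two elements of A(ε,α). -/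
/-!
Write `k N² α = m N + γ_N`. If `N = n₁ + n₂` with both summands large, then
`α n₁² - α n₂² = d N α = d m / k + d γ_N / (k N)` with `d = n₁ - n₂` odd; since `k` is even,
`d m / k` is at distance at least `1 / k` from ℤ, and `|d| ≤ N` gives
`‖α n₁²‖ + ‖α n₂²‖ ≥ (1 - |γ_N|) / k`, which is impossible once `γ_N` is close to `γ` and `ε` is
small. If instead one summand `p` is bounded, then `k α (N - p)² ≡ k p² α + γ_N (1 - 2p / N)` mod ℤ;
along the subsequence the right side tends to `γ + k p² α ∉ ℤ`, while the left side is within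
`k ε (N - p) → 0` of an integer.
-/

open Filter Topology

noncomputable def fpa (t : ℝ) : ℝ := |t - round t|

def A (ε : ℕ → ℝ) (α : ℝ) : Set ℕ := {n : ℕ | fpa (α * (n : ℝ) ^ 2) ≤ ε n}

lemma fpa_le (t : ℝ) (z : ℤ) : fpa t ≤ |t - z| := round_le t z

lemma fpa_pos {t : ℝ} (h : ∀ z : ℤ, t ≠ z) : 0 < fpa t :=
  abs_pos.2 (sub_ne_zero.2 (h _))

lemma fpa_add_le (x e : ℝ) : fpa (x + e) ≤ fpa x + |e| :=
  (fpa_le _ (round x)).trans (by rw [add_sub_right_comm]; exact abs_add_le _ _)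

lemma fpa_sub_sub_le (x y e : ℝ) : fpa (x - y - e) ≤ fpa x + fpa y + |e| :=
  calc fpa (x - y - e) ≤ |x - y - e - ↑(round x - round y)| := fpa_le _ _
    _ = |(x - round x) - (y - round y) - e| := by push_cast; ring_nf
    _ ≤ fpa x + fpa y + |e| := (abs_sub _ _).trans (add_le_add_left (abs_sub _ _) _)

lemma fpa_natCast_mul_sub_intCast_le (k : ℕ) (x : ℝ) (z : ℤ) : fpa (k * x - z) ≤ k * fpa x :=
  calc fpa (k * x - z) ≤ |k * x - z - ↑(k * round x - z)| := fpa_le _ _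
    _ = k * fpa x := by
      push_cast
      rw [show (k : ℝ) * x - z - (k * round x - z) = k * (x - round x) by ring, abs_mul,
        Nat.abs_cast]
      rfl

lemma inv_le_fpa_intCast_div {a : ℤ} {k : ℕ} (ha : Odd a) (hk : Even k) :
    (k : ℝ)⁻¹ ≤ fpa (a / k) := by
  obtain rfl | hk0 := k.eq_zero_or_pos
  · simp [fpa]
  obtain ⟨r, hr⟩ : ∃ r, round ((a : ℝ) / k) = r := ⟨_, rfl⟩
  have hne : a - r * k ≠ 0 := fun h ↦
    Int.not_even_iff_odd.2 ha (sub_eq_zero.1 h ▸ ((Int.even_coe_nat k).2 hk).mul_left r)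
  have hk' : (0 : ℝ) < k := by exact_mod_cast hk0
  have h1 : (1 : ℝ) ≤ |((a - r * k : ℤ) : ℝ)| := by exact_mod_cast Int.one_le_abs hne
  have hfpa : fpa (a / k) = |((a - r * k : ℤ) : ℝ)| / k := by
    rw [fpa, hr, ← abs_of_pos hk', ← abs_div, abs_of_pos hk']
    push_cast
    field_simp
  rw [hfpa, inv_eq_one_div]
  gcongr

section Decomposition

variable {α g : ℝ} {k N : ℕ} {m : ℤ}

lemma natCast_mul_sq_mul_eq (hk : k ≠ 0) (hN : N ≠ 0) (h : N * α = m / k + g / (k * N)) :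
    (k : ℝ) * N ^ 2 * α = m * N + g := by
  rw [show (k : ℝ) * N ^ 2 * α = k * N * (N * α) by ring, h]
  field_simp

lemma one_sub_abs_div_le_fpa_add_fpa {n₁ n₂ : ℕ} (hk : 0 < k) (hkeven : Even k) (hN : Odd N)
    (hm : Odd m) (hrel : (k : ℝ) * N ^ 2 * α = m * N + g) (hsum : n₁ + n₂ = N) :
    (1 - |g|) / k ≤ fpa (α * n₁ ^ 2) + fpa (α * n₂ ^ 2) := by
  have hN0 : (0 : ℝ) < N := by exact_mod_cast hN.pos
  have hk0 : (0 : ℝ) < k := by exact_mod_cast hk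
  set d : ℤ := n₁ - n₂
  have hd : Odd d := by
    have : Odd ((n₁ + n₂ : ℕ) : ℤ) := by rw [hsum]; exact_mod_cast hN
    rw [Int.odd_iff] at this ⊢
    omega
  have hdN : |(d : ℝ)| ≤ N := by
    rw [← Int.cast_abs]
    exact_mod_cast (abs_le.2 ⟨by omega, by omega⟩ : |d| ≤ N)
  have hsumR : (n₁ : ℝ) + n₂ = N := by exact_mod_cast hsum
  have hdiff : α * n₁ ^ 2 - α * n₂ ^ 2 - d * g / (k * N) = ((d * m : ℤ) : ℝ) / k := by
    have hsq : α * n₁ ^ 2 - α * n₂ ^ 2 = d * (α * N) := by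
      simp only [d]; push_cast; rw [← hsumR]; ring
    rw [hsq, show α * N = (m * N + g) / (k * N) by rw [← hrel]; field_simp]
    push_cast
    field_simp
    ring
  have herr : |d * g / (k * N)| ≤ |g| / k := by
    rw [abs_div, abs_mul, abs_mul, abs_of_pos hk0, abs_of_pos hN0,
      div_le_div_iff₀ (by positivity) hk0]
    nlinarith [mul_le_mul_of_nonneg_right hdN (mul_nonneg (abs_nonneg g) hk0.le)]
  calc (1 - |g|) / k = (k : ℝ)⁻¹ - |g| / k := by ring
    _ ≤ fpa (((d * m : ℤ) : ℝ) / k) - |d * g / (k * N)| :=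
      sub_le_sub (inv_le_fpa_intCast_div (hd.mul hm) hkeven) herr
    _ ≤ fpa (α * n₁ ^ 2) + fpa (α * n₂ ^ 2) := by
      linarith [hdiff ▸ fpa_sub_sub_le (α * n₁ ^ 2) (α * n₂ ^ 2) (d * g / (k * N))]

lemma fpa_add_mul_sq_le {p q : ℕ} (hN : N ≠ 0) (hrel : (k : ℝ) * N ^ 2 * α = m * N + g)
    (hsum : p + q = N) (γ : ℝ) :
    fpa (γ + k * p ^ 2 * α) ≤ k * fpa (α * q ^ 2) + |γ - g * (1 - 2 * p / N)| := by
  have hq : (q : ℝ) = N - p := by rw [← hsum]; push_cast; ring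
  have hN0 : (N : ℝ) ≠ 0 := by exact_mod_cast hN
  have hsq : (k : ℝ) * p ^ 2 * α + g * (1 - 2 * p / N)
      = k * (α * q ^ 2) - ((N - 2 * p) * m : ℤ) := by
    rw [hq]
    push_cast
    field_simp
    linear_combination (2 * p - N : ℝ) * hrel
  calc fpa (γ + k * p ^ 2 * α)
      = fpa ((k * p ^ 2 * α + g * (1 - 2 * p / N)) + (γ - g * (1 - 2 * p / N))) := by ring_nf
    _ ≤ fpa (k * (α * q ^ 2) - ((N - 2 * p) * m : ℤ)) + |γ - g * (1 - 2 * p / N)| :=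
      hsq ▸ fpa_add_le _ _
    _ ≤ k * fpa (α * q ^ 2) + |γ - g * (1 - 2 * p / N)| := by
      gcongr
      exact fpa_natCast_mul_sub_intCast_le _ _ _

end Decomposition

lemma tendsto_bound_fpa_add_mul_sq {ι : Type*} {l : Filter ι} {ε : ℕ → ℝ}
    (hε : Tendsto ε atTop (𝓝 0))
    {M : ι → ℕ} (hM : Tendsto M l atTop) {g : ι → ℝ} {γ : ℝ} (hg : Tendsto g l (𝓝 γ)) (k p : ℕ) :
    Tendsto (fun j ↦ k * ε (M j - p) + |γ - g j * (1 - 2 * p / M j)|) l (𝓝 0) := by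
  have h1 : Tendsto (fun j ↦ ε (M j - p)) l (𝓝 0) := hε.comp ((tendsto_sub_atTop_nat p).comp hM)
  have h2 : Tendsto (fun j ↦ (2 * p : ℝ) / M j) l (𝓝 0) :=
    (tendsto_const_div_atTop_nhds_zero_nat _).comp hM
  simpa using (h1.const_mul (k : ℝ)).add ((hg.mul (h2.const_sub 1)).const_sub γ).abs

theorem stmt_1_general (α : ℝ) (ε : ℕ → ℝ) (hε : Tendsto ε atTop (nhds 0))
    (N : ℕ → ℕ) (hmono : StrictMono N) (hodd : ∀ i, Odd (N i))
    (k : ℕ) (hk : 0 < k) (hkeven : Even k)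
    (m : ℕ → ℤ) (hmodd : ∀ i, Odd (m i))
    (γseq : ℕ → ℝ)
    (heq : ∀ i, (N i : ℝ) * α = (m i : ℝ) / (k : ℝ) + γseq i / ((k : ℝ) * (N i : ℝ)))
    (γ : ℝ) (hγ : |γ| < 1)
    (hacc : ∃ φ : ℕ → ℕ, StrictMono φ ∧ Tendsto (γseq ∘ φ) atTop (nhds γ))
    (hirr : ¬ ∃ (n : ℕ) (z : ℤ), γ + (k : ℝ) * (n : ℝ) ^ 2 * α = (z : ℝ)) :
    {i : ℕ | ¬ ∃ n₁ ∈ A ε α, ∃ n₂ ∈ A ε α, n₁ + n₂ = N i}.Infinite := by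
  intro hfin
  obtain ⟨φ, hφ, hγφ⟩ := hacc
  have hk0 : (0 : ℝ) < k := by exact_mod_cast hk
  have hrel : ∀ i, (k : ℝ) * N i ^ 2 * α = m i * N i + γseq i := fun i ↦
    natCast_mul_sq_mul_eq hk.ne' (hodd i).pos.ne' (heq i)
  have hγ' : 0 < 1 - |γ| := sub_pos.2 hγ
  obtain ⟨B, hB⟩ : ∃ B, ∀ n ≥ B, ε n < (1 - |γ|) / (4 * k) :=
    eventually_atTop.1 (hε.eventually_lt_const (by positivity))
  have hNφ : Tendsto (fun j ↦ N (φ j)) atTop atTop := hmono.tendsto_atTop.comp hφ.tendsto_atTop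
  have h_rep : ∀ᶠ j in atTop, ∃ n₁ ∈ A ε α, ∃ n₂ ∈ A ε α, n₁ + n₂ = N (φ j) := by
    have := hfin.eventually_cofinite_notMem
    rw [Nat.cofinite_eq_atTop] at this
    simpa using hφ.tendsto_atTop.eventually this
  have h_large : ∀ᶠ j in atTop, (1 - |γ|) / (2 * k) < (1 - |γseq (φ j)|) / k :=
    ((hγφ.abs.const_sub 1).div_const _).eventually_const_lt (by gcongr; linarith)
  have h_small : ∀ᶠ j in atTop, ∀ p ∈ Finset.range B,
      k * ε (N (φ j) - p) + |γ - γseq (φ j) * (1 - 2 * p / N (φ j))| < fpa (γ + k * p ^ 2 * α) :=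
    (Finset.range B).eventually_all.2 fun p _ ↦
      (tendsto_bound_fpa_add_mul_sq hε hNφ hγφ k p).eventually_lt_const
        (fpa_pos fun z hz ↦ hirr ⟨p, z, hz⟩)
  obtain ⟨j, ⟨n₁, hn₁, n₂, hn₂, hsum⟩, hj_large, hj_small⟩ :=
    (h_rep.and (h_large.and h_small)).exists
  have small : ∀ p q, q ∈ A ε α → p + q = N (φ j) → p < B → False := fun p q hq hpq hpB ↦ by
    have hlt := hj_small p (Finset.mem_range.2 hpB)
    rw [show N (φ j) - p = q by omega] at hlt
    linarith [fpa_add_mul_sq_le (hodd (φ j)).pos.ne' (hrel (φ j)) hpq γ,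
      mul_le_mul_of_nonneg_left (show fpa (α * q ^ 2) ≤ ε q from hq) hk0.le]
  rcases lt_or_ge n₁ B with h₁ | h₁
  · exact small n₁ n₂ hn₂ hsum h₁
  rcases lt_or_ge n₂ B with h₂ | h₂
  · exact small n₂ n₁ hn₁ (by omega) h₂
  have := one_sub_abs_div_le_fpa_add_fpa hk hkeven (hodd (φ j)) (hmodd (φ j)) (hrel (φ j)) hsum
  have : (1 - |γ|) / (4 * k) + (1 - |γ|) / (4 * k) = (1 - |γ|) / (2 * k) := by field_simp; ring
  linarith [hn₁.out.trans_lt (hB n₁ h₁), hn₂.out.trans_lt (hB n₂ h₂)]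

theorem stmt_1 (α : ℝ) (ε : ℕ → ℝ) (hε : Tendsto ε atTop (nhds 0))
    (N : ℕ → ℕ) (hmono : StrictMono N) (hpos : ∀ i, 0 < N i) (hodd : ∀ i, Odd (N i))
    (k : ℕ) (hk : 0 < k) (hkeven : Even k)
    (m : ℕ → ℤ) (hmodd : ∀ i, Odd (m i))
    (γseq : ℕ → ℝ)
    (heq : ∀ i, (N i : ℝ) * α = (m i : ℝ) / (k : ℝ) + γseq i / ((k : ℝ) * (N i : ℝ)))
    (γ : ℝ) (hγ : |γ| < 1)
    (hacc : ∃ φ : ℕ → ℕ, StrictMono φ ∧ Tendsto (γseq ∘ φ) atTop (nhds γ))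
    (hirr : ¬ ∃ (n : ℕ) (z : ℤ), γ + (k : ℝ) * (n : ℝ) ^ 2 * α = (z : ℝ)) :
    {i : ℕ | ¬ ∃ n₁ ∈ A ε α, ∃ n₂ ∈ A ε α, n₁ + n₂ = N i}.Infinite :=
  stmt_1_general α ε hε N hmono hodd k hk hkeven m hmodd γseq heq γ hγ hacc hirr
end

section
/- Let ε₁ = (1/4)·(1 − 1/(4√2)). Suppose ε : ℕ → ℝ satisfies ε(n) ≤ ε₀ for all n, where 0 < ε₀ < ε₁. Then the set A(ε,√2) is not a basis of order 2; moreover there exists a constant K > 0 (depending only on ε₀) such that |{1,…,T} \ (A(ε,√2) + A(ε,√2))| ≥ K·log T for all sufficiently large T. -/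
open Filter
open scoped Pointwise

/-!
If `x ^ 2 = 8 N ^ 2 + 1` with `N` odd and `N = a + b`, then
`√2 b² - √2 a² = √2 N (b - a) = x (b - a) / 2 - δ (b - a) / 2` with `δ = x - 2√2 N`.
Here `x (b - a)` is odd and `0 < δ N ≤ 1 / (4√2)`, so `√2 b² - √2 a²` lies within
`1 / (8√2)` of a half-integer. Hence `‖√2 a²‖ + ‖√2 b²‖ ≥ 1/2 - 1/(8√2) = 2 ε₁`, and no such `N`
lies in `A(ε, √2) + A(ε, √2)` once `ε ≤ ε₀ < ε₁`. The odd-indexed solutions `N` of the Pell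
equation `x² - 8 N² = 1` grow geometrically, which gives `≫ log T` of them up to `T`.
-/

lemma fpa_le_abs_sub_intCast (t : ℝ) (k : ℤ) : fpa t ≤ |t - k| :=
  round_le t k

lemma fpa_sub_le (s t : ℝ) : fpa (s - t) ≤ fpa s + fpa t :=
  calc fpa (s - t) ≤ |s - t - ((round s - round t : ℤ) : ℝ)| := fpa_le_abs_sub_intCast _ _
    _ = |(s - round s) - (t - round t)| := by push_cast; ring_nf
    _ ≤ fpa s + fpa t := abs_sub _ _

lemma half_sub_le_fpa (t : ℝ) (j : ℤ) : 1 / 2 - |t - (j + 1 / 2)| ≤ fpa t := by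
  have hround : 1 / 2 ≤ |(round t : ℝ) - (j + 1 / 2)| := by
    rcases le_or_gt (round t) j with h | h
    · have : (round t : ℝ) ≤ j := by exact_mod_cast h
      rw [abs_of_neg (by linarith)]
      linarith
    · have : (j : ℝ) + 1 ≤ round t := by exact_mod_cast h
      rw [abs_of_pos (by linarith)]
      linarith
  have := abs_sub_abs_le_abs_sub ((round t : ℝ) - (j + 1 / 2)) (t - (j + 1 / 2))
  rw [show (round t : ℝ) - (j + 1 / 2) - (t - (j + 1 / 2)) = -(t - round t) by ring,
    abs_neg] at this
  rw [fpa]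
  linarith

lemma pell_eight_defect {x N : ℝ} (hx : 0 ≤ x) (h : x ^ 2 = 8 * N ^ 2 + 1) :
    0 < x - 2 * √2 * N ∧ (x - 2 * √2 * N) * N ≤ 1 / (4 * √2) := by
  have hs : √2 ^ 2 = 2 := Real.sq_sqrt zero_le_two
  have hs0 : 0 < √2 := by positivity
  set δ := x - 2 * √2 * N
  have hconj : δ * (x + 2 * √2 * N) = 1 := by linear_combination h - 4 * N ^ 2 * hs
  have hδ : 0 < δ := by
    have : 0 < x + 2 * √2 * N := by nlinarith
    exact pos_of_mul_pos_left (hconj.symm ▸ one_pos) this.le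
  refine ⟨hδ, ?_⟩
  rw [le_div_iff₀ (by positivity)]
  nlinarith

lemma half_sub_le_fpa_sqrt_two_mul_sq_sub {x N a b : ℕ} (hpell : x ^ 2 = 8 * N ^ 2 + 1)
    (hN : Odd N) (hab : a + b = N) :
    1 / 2 - 1 / (8 * √2) ≤ fpa (√2 * b ^ 2 - √2 * a ^ 2) := by
  have hx : Odd x := (Nat.odd_pow_iff two_ne_zero).mp (hpell ▸ ⟨4 * N ^ 2, by ring⟩)
  have hm : Odd ((b : ℤ) - a) := by
    rw [Nat.odd_iff] at hN
    rw [Int.odd_iff]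
    omega
  obtain ⟨j, hj⟩ := (hx.natCast (R := ℤ)).mul hm
  have hjR : (x : ℝ) * ((b : ℝ) - a) = 2 * j + 1 := by exact_mod_cast hj
  have habR : (a : ℝ) + b = N := by exact_mod_cast hab
  obtain ⟨hδ, hδN⟩ := pell_eight_defect (Nat.cast_nonneg x)
    (by exact_mod_cast hpell : (x : ℝ) ^ 2 = 8 * (N : ℝ) ^ 2 + 1)
  set δ := (x : ℝ) - 2 * √2 * N with hδdef
  have hdist : √2 * b ^ 2 - √2 * a ^ 2 - (j + 1 / 2) = -(δ * ((b : ℝ) - a) / 2) := by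
    rw [hδdef, ← habR]
    linear_combination hjR / 2
  have hba : |(b : ℝ) - a| ≤ N := by
    rw [abs_le]
    constructor <;> linarith [(Nat.cast_nonneg a : (0 : ℝ) ≤ a), (Nat.cast_nonneg b : (0 : ℝ) ≤ b)]
  have hsmall : |δ * ((b : ℝ) - a) / 2| ≤ 1 / (8 * √2) :=
    calc |δ * ((b : ℝ) - a) / 2| = δ * |(b : ℝ) - a| / 2 := by
          rw [abs_div, abs_mul, abs_of_pos hδ, abs_two]
      _ ≤ δ * N / 2 := by gcongr
      _ ≤ 1 / (4 * √2) / 2 := by gcongr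
      _ = 1 / (8 * √2) := by field_simp; ring
  have := half_sub_le_fpa (√2 * b ^ 2 - √2 * a ^ 2) j
  rw [hdist, abs_neg] at this
  linarith

lemma notMem_add_of_pell_eight {ε : ℕ → ℝ} {ε₀ : ℝ}
    (hε₁ : ε₀ < (1 / 4) * (1 - 1 / (4 * √2))) (hε : ∀ n, ε n ≤ ε₀)
    {x N : ℕ} (hpell : x ^ 2 = 8 * N ^ 2 + 1) (hN : Odd N) :
    N ∉ A ε √2 + A ε √2 := by
  rintro ⟨a, ha, b, hb, hab⟩
  have hlow := half_sub_le_fpa_sqrt_two_mul_sq_sub hpell hN hab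
  have hup := fpa_sub_le (√2 * b ^ 2) (√2 * a ^ 2)
  have hs0 : 0 < √2 := by positivity
  have h8 : 1 / (8 * √2) = 1 / (4 * √2) / 2 := by field_simp; ring
  linarith [ha.trans (hε a), hb.trans (hε b)]

namespace Pell

variable {a : ℕ} (a1 : 1 < a)

lemma xn_sq (n : ℕ) : xn a1 n ^ 2 = (a * a - 1) * yn a1 n ^ 2 + 1 := by
  have h : xn a1 n * xn a1 n - (a * a - 1) * yn a1 n * yn a1 n = 1 := pell_eq a1 n
  rw [mul_assoc] at h
  rw [sq, sq]
  omega

lemma yn_succ_le_pow (n : ℕ) : yn a1 (n + 1) ≤ (2 * a) ^ n := by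
  induction n with
  | zero => simp
  | succ n ih =>
    calc yn a1 (n + 2) ≤ yn a1 (n + 2) + yn a1 n := Nat.le_add_right _ _
      _ = 2 * a * yn a1 (n + 1) := yn_succ_succ a1 n
      _ ≤ 2 * a * (2 * a) ^ n := Nat.mul_le_mul_left _ ih
      _ = (2 * a) ^ (n + 1) := (pow_succ' _ _).symm

lemma odd_yn_two_mul_add_one (k : ℕ) : Odd (yn a1 (2 * k + 1)) := by
  have := yn_modEq_two a1 (2 * k + 1)
  rw [Nat.odd_iff, this]
  omega

end Pell

lemma log_div_log_le_ncard_Icc_diff {B : Set ℕ} {f : ℕ → ℕ} {c : ℕ} (hc : 1 < c)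
    (hf : Function.Injective f) (hf1 : ∀ k, 1 ≤ f k) (hfc : ∀ k, f k ≤ c ^ k)
    (hfB : ∀ k, f k ∉ B) {T : ℕ} (hT : 1 ≤ T) :
    Real.log T / Real.log c ≤ (Set.Icc 1 T \ B).ncard := by
  set L := Nat.log c T
  have hsub : f '' (Finset.range (L + 1) : Set ℕ) ⊆ Set.Icc 1 T \ B := by
    rintro _ ⟨k, hk, rfl⟩
    refine ⟨⟨hf1 k, ?_⟩, hfB k⟩
    calc f k ≤ c ^ k := hfc k
      _ ≤ c ^ L := Nat.pow_le_pow_right (by omega) (Nat.lt_succ_iff.mp (Finset.mem_range.mp hk))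
      _ ≤ T := Nat.pow_log_le_self c (by omega)
  have hcard : L + 1 ≤ (Set.Icc 1 T \ B).ncard := by
    calc L + 1 = (f '' (Finset.range (L + 1) : Set ℕ)).ncard := by
          rw [Set.ncard_image_of_injective _ hf, Set.ncard_coe_finset, Finset.card_range]
      _ ≤ _ := Set.ncard_le_ncard hsub ((Set.finite_Icc 1 T).sdiff)
  have hlog : Real.log T < (L + 1) * Real.log c := by
    have hT' : (T : ℝ) < (c : ℝ) ^ (L + 1) := by
      exact_mod_cast Nat.lt_pow_succ_log_self hc T
    calc Real.log T < Real.log ((c : ℝ) ^ (L + 1)) :=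
          Real.log_lt_log (by exact_mod_cast hT) hT'
      _ = (L + 1) * Real.log c := by rw [Real.log_pow]; push_cast; ring
  rw [div_le_iff₀ (Real.log_pos (by exact_mod_cast hc))]
  have : ((L + 1 : ℕ) : ℝ) ≤ (Set.Icc 1 T \ B).ncard := by exact_mod_cast hcard
  push_cast at this
  nlinarith [Real.log_pos (by exact_mod_cast hc : (1 : ℝ) < c)]

theorem stmt_2_general (ε : ℕ → ℝ) (ε₀ : ℝ)
    (hε₁ : ε₀ < (1 / 4) * (1 - 1 / (4 * Real.sqrt 2)))
    (hε : ∀ n, ε n ≤ ε₀) :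
    (¬ ∀ᶠ N : ℕ in atTop, N ∈ A ε (Real.sqrt 2) + A ε (Real.sqrt 2)) ∧
    ∃ K > (0 : ℝ), ∀ᶠ T : ℕ in atTop,
      K * Real.log T ≤
        ((Set.Icc 1 T \ (A ε (Real.sqrt 2) + A ε (Real.sqrt 2))).ncard : ℝ) := by
  have a1 : 1 < 3 := by norm_num
  set f : ℕ → ℕ := fun k => Pell.yn a1 (2 * k + 1)
  have hf : Function.Injective f :=
    (Pell.strictMono_y a1).injective.comp fun _ _ h => by omega
  have hfB : ∀ k, f k ∉ A ε √2 + A ε √2 := fun k =>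
    notMem_add_of_pell_eight hε₁ hε (Pell.xn_sq a1 _) (Pell.odd_yn_two_mul_add_one a1 k)
  have hfc : ∀ k, f k ≤ 36 ^ k := fun k =>
    calc f k ≤ (2 * 3) ^ (2 * k) := Pell.yn_succ_le_pow a1 (2 * k)
      _ = 36 ^ k := by rw [pow_mul]; norm_num
  refine ⟨fun h => ?_, 1 / Real.log 36, by positivity, ?_⟩
  · obtain ⟨k, hk⟩ := (hf.nat_tendsto_atTop.eventually h).exists
    exact hfB k hk
  · filter_upwards [eventually_ge_atTop 1] with T hT
    rw [one_div_mul_eq_div]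
    exact_mod_cast log_div_log_le_ncard_Icc_diff (by norm_num) hf
      (fun k => (Nat.le_add_left 1 (2 * k)).trans (Pell.yn_ge_n a1 _)) hfc hfB hT

theorem stmt_2 (ε : ℕ → ℝ) (ε₀ : ℝ) (hε₀ : 0 < ε₀)
    (hε₁ : ε₀ < (1 / 4) * (1 - 1 / (4 * Real.sqrt 2)))
    (hε : ∀ n, ε n ≤ ε₀) :
    (¬ ∀ᶠ N : ℕ in atTop, N ∈ A ε (Real.sqrt 2) + A ε (Real.sqrt 2)) ∧
    ∃ K > (0 : ℝ), ∀ᶠ T : ℕ in atTop,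
      K * Real.log T ≤
        ((Set.Icc 1 T \ (A ε (Real.sqrt 2) + A ε (Real.sqrt 2))).ncard : ℝ) :=
  stmt_2_general ε ε₀ hε₁ hε
end

section
/- Suppose ε : ℕ → ℝ satisfies ε(n) → 0 as n → ∞. Then the set A(ε,√2) is not a basis of order 2; that is, infinitely many natural numbers are not sums of two elements of A(ε,√2). -/
open Filter
open scoped Pointwise

/-!
Take `N` odd with `x² - 8N² = 1` for some `x`, and write `N = a + b`. Then
`√2 (b² - a²) = √2 N (N - 2a)`, and since `x ≈ 2√2 N` and `x (N - 2a)` is odd, this is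
`1/2 + (√2 N - x/2)(N - 2a)` modulo `1`, where `|(√2 N - x/2)(N - 2a)| ≤ (x/2 - √2 N) N < 1/10`.
Hence `‖√2 a²‖ + ‖√2 b²‖ ≥ 2/5`, so `a` and `b` cannot both be large elements of `A(ε, √2)`.
If `a` is one of the finitely many small numbers, then the error term tends to `√2/16` as
`N → ∞`, so `‖√2 b²‖` tends to `‖√2 a² + 1/2 - √2/16‖`, which is positive by irrationality,
whereas `ε b → 0`.
-/

open Real Topology

lemma fpa_eq_norm (t : ℝ) : fpa t = ‖(t : UnitAddCircle)‖ :=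
  UnitAddCircle.norm_eq.symm

lemma mem_A_iff {ε : ℕ → ℝ} {α : ℝ} {n : ℕ} :
    n ∈ A ε α ↔ ‖((α * n ^ 2 : ℝ) : UnitAddCircle)‖ ≤ ε n := by
  rw [← fpa_eq_norm]; rfl

lemma UnitAddCircle.norm_coe_le_abs (t : ℝ) : ‖(t : UnitAddCircle)‖ ≤ |t| := by
  simpa [UnitAddCircle.norm_eq] using round_le t 0

lemma UnitAddCircle.norm_coe_sub_abs_le (u s : ℝ) :
    ‖(u : UnitAddCircle)‖ - |s| ≤ ‖((u + s : ℝ) : UnitAddCircle)‖ := by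
  have h := norm_sub_le ((u + s : ℝ) : UnitAddCircle) (s : UnitAddCircle)
  rw [← AddCircle.coe_sub, add_sub_cancel_right] at h
  linarith [UnitAddCircle.norm_coe_le_abs s]

lemma coe_mul_sq_eq_of_add_eq (α : ℝ) {x N a b : ℕ} (hx : Odd x) (hN : Odd N)
    (hab : a + b = N) :
    ((α * b ^ 2 : ℝ) : UnitAddCircle) =
      ((α * a ^ 2 + 1 / 2 + (α * N - x / 2) * (N - 2 * a) : ℝ) : UnitAddCircle) := by
  obtain ⟨S, hS⟩ : Odd ((x : ℤ) * (N - 2 * a)) :=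
    hx.natCast.mul (hN.natCast.sub_even (even_two_mul _))
  have hS' : (x : ℝ) * (N - 2 * a) = 2 * S + 1 := by exact_mod_cast hS
  have hb : (b : ℝ) = N - a := by rw [← hab]; push_cast; ring
  rw [← sub_eq_zero, ← AddCircle.coe_sub, AddCircle.coe_eq_zero_iff]
  refine ⟨S, ?_⟩
  rw [hb, zsmul_eq_mul, mul_one]
  linear_combination (-1 / 2 : ℝ) * hS'

lemma pell_gap_mul_add_eq {x N : ℝ} (hpell : x ^ 2 = 8 * N ^ 2 + 1) :
    (x / 2 - √2 * N) * (x / 2 + √2 * N) = 1 / 4 := by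
  linear_combination hpell / 4 - N ^ 2 * Real.sq_sqrt (zero_le_two (α := ℝ))

section PellGap

variable {x N : ℝ} (hpell : x ^ 2 = 8 * N ^ 2 + 1) (hx : 0 ≤ x) (hN : 1 ≤ N)
include hpell hx hN

lemma pell_gap_pos : 0 < x / 2 - √2 * N := by
  have := pell_gap_mul_add_eq hpell
  have : 0 < x / 2 + √2 * N := by positivity
  nlinarith

lemma pell_gap_mul_le : (x / 2 - √2 * N) * N ≤ 1 / 10 := by
  have hδ := pell_gap_pos hpell hx hN
  have h := pell_gap_mul_add_eq hpell
  have hs : (1.4 : ℝ) < √2 := by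
    rw [Real.lt_sqrt (by norm_num)]; norm_num
  nlinarith [mul_le_mul_of_nonneg_left (show 2.8 * N ≤ x / 2 + √2 * N by nlinarith) hδ.le]

lemma abs_pell_gap_mul_le {a : ℝ} (ha : 0 ≤ a) (haN : a ≤ N) :
    |(√2 * N - x / 2) * (N - 2 * a)| ≤ 1 / 10 := by
  have hδ := pell_gap_pos hpell hx hN
  rw [abs_mul, abs_sub_comm, abs_of_pos hδ]
  calc (x / 2 - √2 * N) * |N - 2 * a| ≤ (x / 2 - √2 * N) * N := by
        gcongr; rw [abs_le]; constructor <;> linarith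
    _ ≤ 1 / 10 := pell_gap_mul_le hpell hx hN

/-- `(x/2 - √2 N) N = N / (2x + 4√2 N)` tends to `1 / (8√2) = √2/16`. -/
lemma abs_pell_gap_mul_add_le {a : ℝ} (ha : 0 ≤ a) :
    |(√2 * N - x / 2) * (N - 2 * a) + √2 / 16| ≤ (a + 1) / N := by
  set δ := x / 2 - √2 * N
  have hδ : 0 < δ := pell_gap_pos hpell hx hN
  have hδN : δ * N ≤ 1 / 10 := pell_gap_mul_le hpell hx hN
  have hs := Real.sq_sqrt (zero_le_two (α := ℝ))
  have hs' : √2 < 2 := by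
    rw [Real.sqrt_lt' two_pos]; norm_num
  have hexp : (√2 * N - x / 2) * (N - 2 * a) + √2 / 16 = √2 * δ ^ 2 / 4 + 2 * δ * a := by
    linear_combination (-√2 / 4) * pell_gap_mul_add_eq hpell + N * δ / 2 * hs
  have hsq : √2 * δ ^ 2 / 4 ≤ δ := by nlinarith
  rw [hexp, abs_of_nonneg (by positivity), le_div_iff₀ (by linarith)]
  nlinarith [mul_le_mul_of_nonneg_right hδN ha]

end PellGap

lemma two_fifths_le_norm_add_norm {x N a b : ℕ} (hpell : (x : ℝ) ^ 2 = 8 * N ^ 2 + 1)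
    (hx : Odd x) (hN : Odd N) (hab : a + b = N) :
    2 / 5 ≤ ‖((√2 * a ^ 2 : ℝ) : UnitAddCircle)‖ + ‖((√2 * b ^ 2 : ℝ) : UnitAddCircle)‖ := by
  have hN1 : (1 : ℝ) ≤ N := by exact_mod_cast hN.pos
  have haN : (a : ℝ) ≤ N := by exact_mod_cast (show a ≤ N by omega)
  have herr := abs_pell_gap_mul_le hpell (Nat.cast_nonneg x) hN1 (Nat.cast_nonneg a) haN
  have hhalf : ‖((1 / 2 : ℝ) : UnitAddCircle)‖ = 1 / 2 := by
    simpa using AddCircle.norm_half_period_eq (1 : ℝ)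
  calc 2 / 5 ≤ ‖((1 / 2 : ℝ) : UnitAddCircle)‖ - |(√2 * N - x / 2) * (N - 2 * a)| := by
        linarith
    _ ≤ ‖((1 / 2 + (√2 * N - x / 2) * (N - 2 * a) : ℝ) : UnitAddCircle)‖ :=
        UnitAddCircle.norm_coe_sub_abs_le _ _
    _ = ‖((√2 * b ^ 2 : ℝ) : UnitAddCircle) - ((√2 * a ^ 2 : ℝ) : UnitAddCircle)‖ := by
        rw [coe_mul_sq_eq_of_add_eq _ hx hN hab, ← AddCircle.coe_sub]
        ring_nf
    _ ≤ _ := by rw [add_comm]; exact norm_sub_le _ _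

lemma norm_shift_sub_le_norm {x N a b : ℕ} (hpell : (x : ℝ) ^ 2 = 8 * N ^ 2 + 1)
    (hx : Odd x) (hN : Odd N) (hab : a + b = N) :
    ‖((√2 * a ^ 2 + 1 / 2 - √2 / 16 : ℝ) : UnitAddCircle)‖ - (a + 1) / N ≤
      ‖((√2 * b ^ 2 : ℝ) : UnitAddCircle)‖ := by
  have hN1 : (1 : ℝ) ≤ N := by exact_mod_cast hN.pos
  have herr := abs_pell_gap_mul_add_le hpell (Nat.cast_nonneg x) hN1 (Nat.cast_nonneg a)
  calc _ ≤ ‖((√2 * a ^ 2 + 1 / 2 - √2 / 16 : ℝ) : UnitAddCircle)‖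
          - |(√2 * N - x / 2) * (N - 2 * a) + √2 / 16| := by linarith
    _ ≤ _ := UnitAddCircle.norm_coe_sub_abs_le _ _
    _ = _ := by rw [coe_mul_sq_eq_of_add_eq _ hx hN hab]; ring_nf

lemma norm_shift_pos (a : ℕ) : 0 < ‖((√2 * a ^ 2 + 1 / 2 - √2 / 16 : ℝ) : UnitAddCircle)‖ := by
  rw [norm_pos_iff, Ne, AddCircle.coe_eq_zero_iff]
  rintro ⟨n, hn⟩
  have hne : (16 * (a : ℤ) ^ 2 - 1 : ℤ) ≠ 0 := by omega
  refine (irrational_sqrt_two.intCast_mul hne).ne_int (16 * n - 8) ?_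
  rw [zsmul_eq_mul, mul_one] at hn
  push_cast
  linear_combination -16 * hn

/-- The solutions `(3 + √8) ^ (2k + 1)` of `x² - 8N² = 1`: those with `N` odd. -/
def pellSeq : ℕ → ℕ × ℕ
  | 0 => (3, 1)
  | k + 1 => (17 * (pellSeq k).1 + 48 * (pellSeq k).2, 6 * (pellSeq k).1 + 17 * (pellSeq k).2)

lemma pellSeq_sq (k : ℕ) : ((pellSeq k).1 : ℝ) ^ 2 = 8 * (pellSeq k).2 ^ 2 + 1 := by
  induction k with
  | zero => norm_num [pellSeq]
  | succ k ih => simp only [pellSeq]; push_cast; linear_combination ih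

lemma odd_pellSeq (k : ℕ) : Odd (pellSeq k).1 ∧ Odd (pellSeq k).2 := by
  induction k with
  | zero => decide
  | succ k ih =>
    simp only [pellSeq, Nat.odd_iff] at ih ⊢
    omega

lemma tendsto_pellSeq_snd : Tendsto (fun k => (pellSeq k).2) atTop atTop :=
  StrictMono.tendsto_atTop <| strictMono_nat_of_lt_succ fun k => by
    have := (odd_pellSeq k).2.pos
    simp only [pellSeq]
    omega

lemma eventually_pellSeq_snd_sub_notMem_A {ε : ℕ → ℝ} (hε : Tendsto ε atTop (𝓝 0)) (a : ℕ) :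
    ∀ᶠ k in atTop, (pellSeq k).2 - a ∉ A ε √2 := by
  set c := ‖((√2 * a ^ 2 + 1 / 2 - √2 / 16 : ℝ) : UnitAddCircle)‖
  have hN := tendsto_pellSeq_snd
  have hlim : Tendsto (fun k => c - (a + 1) / ((pellSeq k).2 : ℝ) - ε ((pellSeq k).2 - a))
      atTop (𝓝 c) := by
    simpa using (tendsto_const_nhds.sub ((tendsto_const_div_atTop_nhds_zero_nat _).comp hN)).sub
      (hε.comp ((tendsto_sub_atTop_nat a).comp hN))
  filter_upwards [hlim.eventually_const_lt (norm_shift_pos a), hN.eventually_ge_atTop a]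
    with k hk hak
  have := norm_shift_sub_le_norm (pellSeq_sq k) (odd_pellSeq k).1 (odd_pellSeq k).2
    (Nat.add_sub_cancel' hak)
  rw [mem_A_iff, not_le]
  linarith

theorem stmt_3 (ε : ℕ → ℝ) (hε : Tendsto ε atTop (nhds 0)) :
    {N : ℕ | N ∉ A ε (Real.sqrt 2) + A ε (Real.sqrt 2)}.Infinite := by
  obtain ⟨K, hK⟩ := eventually_atTop.mp (hε.eventually_lt_const (by norm_num : (0 : ℝ) < 1 / 5))
  have hsmall : ∀ᶠ k in atTop, ∀ a ∈ Set.Iic K, (pellSeq k).2 - a ∉ A ε √2 :=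
    (Set.finite_Iic K).eventually_all.mpr fun a _ => eventually_pellSeq_snd_sub_notMem_A hε a
  rw [← Nat.frequently_atTop_iff_infinite]
  refine tendsto_pellSeq_snd.frequently (hsmall.mono fun k hk => ?_).frequently
  rintro ⟨a, ha, b, hb, hab⟩
  rcases le_or_gt a K with haK | haK
  · exact hk a haK (by rwa [← hab, Nat.add_sub_cancel_left])
  rcases le_or_gt b K with hbK | hbK
  · exact hk b hbK (by rwa [← hab, Nat.add_sub_cancel])
  rw [mem_A_iff] at ha hb
  have := two_fifths_le_norm_add_norm (pellSeq_sq k) (odd_pellSeq k).1 (odd_pellSeq k).2 hab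
  linarith [hK a haK.le, hK b hbK.le]
end
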